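/- In G_n = P_n □ C_4 with n ≥ 2, R_{G_n}[(a_1,b_1),(a_n,b_2)] < R_{G_n}[(a_1,b_1),(a_n,b_3)]. -/

import Mathlib

open Matrix Finset

open Classical in
/-- The Moore–Penrose pseudoinverse of a real square matrix, defined via the
four Penrose conditions (it is unique when it exists). -/
noncomputable def Matrix.mpinv {m : Type*} [Fintype m] [DecidableEq m]
    (A : Matrix m m ℝ) : Matrix m m ℝ :=
  if h : ∃ B : Matrix m m ℝ,
      A * B * A = A ∧ B * A * B = B ∧ (A * B)ᵀ = A * B ∧ (B * A)ᵀ = B * A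
  then h.choose else 0

/-- Effective resistance between `u` and `v` with respect to a (weighted)
Laplacian matrix `L`:  `(e_u - e_v)ᵀ L⁺ (e_u - e_v)`. -/
noncomputable def effRes {m : Type*} [Fintype m] [DecidableEq m]
    (L : Matrix m m ℝ) (u v : m) : ℝ :=
  (Pi.single u 1 - Pi.single v 1) ⬝ᵥ (L.mpinv *ᵥ (Pi.single u 1 - Pi.single v 1))

/-- The (real) Laplacian matrix of a simple graph. -/
noncomputable def lapm {V : Type*} [Fintype V] [DecidableEq V]
    (G : SimpleGraph V) : Matrix V V ℝ :=
  letI := Classical.decRel G.Adj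
  G.lapMatrix ℝ

/-- Resistance distance between two vertices of a simple graph. -/
noncomputable def resDist {V : Type*} [Fintype V] [DecidableEq V]
    (G : SimpleGraph V) (u v : V) : ℝ :=
  effRes (lapm G) u v

/-- Resistance diameter of a simple graph. -/
noncomputable def resDiam {V : Type*} [Fintype V] [DecidableEq V]
    (G : SimpleGraph V) : ℝ :=
  ⨆ p : V × V, resDist G p.1 p.2

/-- The weighted Laplacian of the cone over `G` with apex `Sum.inr ()`:
edges of `G` have conductance `1` (unit resistance), and each vertex of `G`
is joined to the apex by an edge of conductance `m` (resistance `1/m`). -/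
noncomputable def coneLap {V : Type*} [Fintype V] [DecidableEq V]
    (G : SimpleGraph V) (m : ℝ) : Matrix (V ⊕ Unit) (V ⊕ Unit) ℝ :=
  letI := Classical.decRel G.Adj
  let W : Matrix (V ⊕ Unit) (V ⊕ Unit) ℝ := fun i j =>
    match i, j with
    | Sum.inl a, Sum.inl b => if G.Adj a b then 1 else 0
    | Sum.inl _, Sum.inr _ => m
    | Sum.inr _, Sum.inl _ => m
    | Sum.inr _, Sum.inr _ => 0
  Matrix.of fun i j => (if i = j then ∑ k, W i k else 0) - W i j

/-- The `k`-dimensional hypercube graph `Q_k`. -/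
def hypercube (k : ℕ) : SimpleGraph (Fin k → Bool) where
  Adj x y := (Finset.univ.filter fun i => x i ≠ y i).card = 1
  symm := by
    constructor
    intro x y h
    rw [← h]
    congr 1
    ext i
    simp [ne_comm]
  loopless := by constructor; intro x; simp

/-- The join `G + H` of two graphs on disjoint vertex sets. -/
def graphJoin {V W : Type*} (G : SimpleGraph V) (H : SimpleGraph W) :
    SimpleGraph (V ⊕ W) where
  Adj x y :=
    match x, y with
    | Sum.inl a, Sum.inl b => G.Adj a b
    | Sum.inr a, Sum.inr b => H.Adj a b
    | Sum.inl _, Sum.inr _ => True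
    | Sum.inr _, Sum.inl _ => True
  symm := by
    constructor
    rintro (a | a) (b | b) h
    · exact G.adj_symm h
    · trivial
    · trivial
    · exact H.adj_symm h
  loopless := by
    constructor
    rintro (a | a) h
    · exact G.irrefl h
    · exact H.irrefl h

/-! The resistance between `u` and `v` is `y u - y v` for any potential `y` with
`L y = e_u - e_v`. On `P_n □ C₄` such a potential separates into path profiles times the Fourier
modes `1`, `cos (π b / 2)`, `(-1) ^ b` of `C₄`, with eigenvalues `μ = 0, 2, 4`; along the path,
mode `μ` follows the recurrence `w (k + 2) = (2 + μ) w (k + 1) - w k`. This yields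
`R[(a₁,b₁),(aₙ,b_{c+1})] = (n - 1)/4 + (w₂(n-1) - cos (π c / 2))/D₂ + (w₄(n-1) - (-1)^c)/(2 D₄)`
with `D_μ = w_μ(n) - w_μ(n-1)`, so the two resistances differ by `1/D₂ - 1/D₄ > 0`, since the
increments of `w_μ` grow with `μ`. -/

open SimpleGraph

namespace Matrix

variable {m : Type*} [Fintype m] [DecidableEq m]

def IsMPInverse (A B : Matrix m m ℝ) : Prop :=
  A * B * A = A ∧ B * A * B = B ∧ (A * B)ᵀ = A * B ∧ (B * A)ᵀ = B * A

-- `0⁻¹ = 0` makes the entrywise inverse the pseudoinverse of a diagonal matrix.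
lemma isMPInverse_diagonal_inv (d : m → ℝ) : IsMPInverse (diagonal d) (diagonal d⁻¹) := by
  refine ⟨?_, ?_, ?_, ?_⟩ <;>
    simp only [diagonal_mul_diagonal, diagonal_transpose, Pi.inv_apply, mul_inv_mul_cancel]
  simpa using congrArg diagonal (funext fun i => mul_inv_mul_cancel (d i)⁻¹)

lemma IsMPInverse.conj {A B U : Matrix m m ℝ} (h : IsMPInverse A B) (hU : Uᵀ * U = 1) :
    IsMPInverse (U * A * Uᵀ) (U * B * Uᵀ) := by
  have hmul : ∀ X Y : Matrix m m ℝ, U * X * Uᵀ * (U * Y * Uᵀ) = U * (X * Y) * Uᵀ := by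
    intro X Y
    simp only [Matrix.mul_assoc, ← Matrix.mul_assoc Uᵀ U, hU, Matrix.one_mul]
  obtain ⟨h₁, h₂, h₃, h₄⟩ := h
  refine ⟨?_, ?_, ?_, ?_⟩
  · rw [hmul, hmul, h₁]
  · rw [hmul, hmul, h₂]
  · rw [hmul, transpose_mul, transpose_mul, transpose_transpose, h₃, ← Matrix.mul_assoc]
  · rw [hmul, transpose_mul, transpose_mul, transpose_transpose, h₄, ← Matrix.mul_assoc]

lemma IsSymm.exists_isMPInverse {A : Matrix m m ℝ} (hA : A.IsSymm) : ∃ B, IsMPInverse A B := by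
  have hH : A.IsHermitian := by
    rwa [IsHermitian, conjTranspose_eq_transpose_of_trivial]
  set U : Matrix m m ℝ := (hH.eigenvectorUnitary : Matrix m m ℝ)
  have hstar : star U = Uᵀ := conjTranspose_eq_transpose_of_trivial U
  have hU : Uᵀ * U = 1 := by
    rw [← hstar]; exact Unitary.coe_star_mul_self hH.eigenvectorUnitary
  have hspec : A = U * diagonal hH.eigenvalues * Uᵀ := by
    rw [← hstar]; simpa using hH.spectral_theorem
  have h := (isMPInverse_diagonal_inv hH.eigenvalues).conj hU
  rw [← hspec] at h
  exact ⟨_, h⟩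

lemma IsSymm.mul_mpinv_mul {A : Matrix m m ℝ} (hA : A.IsSymm) : A * A.mpinv * A = A := by
  unfold mpinv
  split_ifs with h
  exacts [h.choose_spec.1, absurd hA.exists_isMPInverse h]

end Matrix

lemma effRes_eq_of_mulVec_eq {m : Type*} [Fintype m] [DecidableEq m] {L : Matrix m m ℝ}
    (hL : L.IsSymm) {u v : m} {y : m → ℝ} (hy : L *ᵥ y = Pi.single u 1 - Pi.single v 1) :
    effRes L u v = y u - y v := by
  calc effRes L u v = y ⬝ᵥ ((L * L.mpinv * L) *ᵥ y) := by
        rw [effRes, ← hy, ← mulVec_mulVec, ← mulVec_mulVec, dotProduct_comm, dotProduct_mulVec,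
          ← mulVec_transpose, hL.eq, dotProduct_comm]
    _ = y u - y v := by
        rw [hL.mul_mpinv_mul, hy, dotProduct_sub, dotProduct_single, dotProduct_single,
          mul_one, mul_one]

namespace SimpleGraph

section

variable {V : Type*} [Fintype V] [DecidableEq V]

lemma lapm_eq_lapMatrix (G : SimpleGraph V) [DecidableRel G.Adj] : lapm G = G.lapMatrix ℝ := by
  unfold lapm
  congr

lemma isSymm_lapm (G : SimpleGraph V) : (lapm G).IsSymm := by
  classical
  rw [lapm_eq_lapMatrix]
  exact G.isSymm_lapMatrix ℝ

lemma resDist_eq_of_lapm_mulVec_eq {G : SimpleGraph V} {u v : V} {y : V → ℝ}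
    (hy : lapm G *ᵥ y = Pi.single u 1 - Pi.single v 1) : resDist G u v = y u - y v :=
  effRes_eq_of_mulVec_eq G.isSymm_lapm hy

lemma lapm_mulVec_const (G : SimpleGraph V) (a : ℝ) : lapm G *ᵥ (fun _ => a) = 0 := by
  classical
  rw [lapm_eq_lapMatrix, show (fun _ : V => a) = a • fun _ => (1 : ℝ) by ext; simp,
    mulVec_smul, lapMatrix_mulVec_const_eq_zero, smul_zero]

end

section

variable {α β : Type*} [Fintype α] [Fintype β] [DecidableEq α] [DecidableEq β]

lemma lapm_boxProd_mulVec_apply (G : SimpleGraph α) (H : SimpleGraph β) (y : α × β → ℝ)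
    (a : α) (b : β) :
    (lapm (G □ H) *ᵥ y) (a, b) =
      (lapm G *ᵥ fun a' => y (a', b)) a + (lapm H *ᵥ fun b' => y (a, b')) b := by
  classical
  simp only [lapm_eq_lapMatrix, lapMatrix_mulVec_apply, degree_boxProd,
    neighborFinset_boxProd, Finset.sum_disjUnion, Finset.sum_product, Finset.sum_singleton]
  push_cast
  ring

lemma lapm_boxProd_mulVec_mul (G : SimpleGraph α) {H : SimpleGraph β} (f : α → ℝ)
    {ψ : β → ℝ} {μ : ℝ} (hψ : lapm H *ᵥ ψ = μ • ψ) :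
    lapm (G □ H) *ᵥ (fun p => f p.1 * ψ p.2) = fun p => ((lapm G + μ • 1) *ᵥ f) p.1 * ψ p.2 := by
  ext ⟨a, b⟩
  rw [lapm_boxProd_mulVec_apply, show (fun a' => f a' * ψ b) = ψ b • f by ext; simp [mul_comm],
    show (fun b' => f a * ψ b') = f a • ψ by ext; simp, mulVec_smul, mulVec_smul, hψ,
    add_mulVec, smul_mulVec, one_mulVec]
  simp only [Pi.smul_apply, Pi.add_apply, smul_eq_mul]
  ring

end

lemma lapm_cycleGraph_mulVec_apply (n : ℕ) (g : Fin (n + 3) → ℝ) (c : Fin (n + 3)) :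
    (lapm (cycleGraph (n + 3)) *ᵥ g) c = 2 * g c - g (c - 1) - g (c + 1) := by
  have hne : c - 1 ≠ c + 1 := by
    simp only [ne_eq, sub_eq_iff_eq_add, add_assoc c, left_eq_add]
    exact ne_of_beq_false rfl
  rw [lapm_eq_lapMatrix, lapMatrix_mulVec_apply, cycleGraph_degree_three_le,
    cycleGraph_neighborFinset, Finset.sum_pair hne]
  push_cast
  ring

lemma lapm_pathGraph_mulVec_apply (m : ℕ) (g : ℕ → ℝ) (i : Fin (m + 2)) :
    (lapm (pathGraph (m + 2)) *ᵥ fun j => g j) i =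
      if (i : ℕ) = 0 then g 0 - g 1
      else if (i : ℕ) = m + 1 then g (m + 1) - g m
      else 2 * g i - g (i - 1) - g (i + 1) := by
  classical
  have hN : ∀ s : Finset (Fin (m + 2)), (∀ j, j ∈ s ↔ (i : ℕ) + 1 = j ∨ (j : ℕ) + 1 = i) →
      (lapm (pathGraph (m + 2)) *ᵥ fun j => g j) i = s.card * g i - ∑ j ∈ s, g j := by
    intro s hs
    have : (pathGraph (m + 2)).neighborFinset i = s := by
      ext j; rw [mem_neighborFinset, pathGraph_adj, hs]
    rw [lapm_eq_lapMatrix, lapMatrix_mulVec_apply, ← card_neighborFinset_eq_degree, this]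
  split_ifs with h0 hl
  · rw [hN {⟨1, by omega⟩} (by simp [Fin.ext_iff]; omega), Finset.card_singleton,
      Finset.sum_singleton, h0]
    simp
  · rw [hN {⟨m, by omega⟩} (by simp [Fin.ext_iff]; omega), Finset.card_singleton,
      Finset.sum_singleton, hl]
    simp
  · have hne : (⟨i - 1, by omega⟩ : Fin (m + 2)) ≠ ⟨i + 1, by omega⟩ := by
      rw [Ne, Fin.mk.injEq]; omega
    rw [hN {⟨i - 1, by omega⟩, ⟨i + 1, by omega⟩} (by simp [Fin.ext_iff]; omega),
      Finset.card_pair hne, Finset.sum_pair hne]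
    push_cast
    ring

end SimpleGraph

/-- The solution of `(L + μ) w = 0` on a path, grown from its left end `w 0 = 1`. -/
def pathSeq (μ : ℝ) : ℕ → ℝ
  | 0 => 1
  | 1 => 1 + μ
  | k + 2 => (2 + μ) * pathSeq μ (k + 1) - pathSeq μ k

lemma pathSeq_add_two_sub (μ : ℝ) (k : ℕ) :
    pathSeq μ (k + 2) - pathSeq μ (k + 1) =
      pathSeq μ (k + 1) - pathSeq μ k + μ * pathSeq μ (k + 1) := by
  rw [pathSeq]; ring

lemma one_le_pathSeq_and_le_succ_sub {μ : ℝ} (hμ : 0 ≤ μ) :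
    ∀ k, 1 ≤ pathSeq μ k ∧ μ ≤ pathSeq μ (k + 1) - pathSeq μ k
  | 0 => by simp [pathSeq]
  | k + 1 => by
    obtain ⟨h₁, h₂⟩ := one_le_pathSeq_and_le_succ_sub hμ k
    have : 0 ≤ μ * pathSeq μ (k + 1) := mul_nonneg hμ (by linarith)
    constructor <;> linarith [pathSeq_add_two_sub μ k]

lemma pathSeq_succ_sub_pos {μ : ℝ} (hμ : 0 < μ) (k : ℕ) :
    0 < pathSeq μ (k + 1) - pathSeq μ k :=
  hμ.trans_le (one_le_pathSeq_and_le_succ_sub hμ.le k).2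

lemma pathSeq_succ_sub_lt {μ ν : ℝ} (hμ : 0 ≤ μ) (hμν : μ < ν) (k : ℕ) :
    pathSeq μ (k + 1) - pathSeq μ k < pathSeq ν (k + 1) - pathSeq ν k := by
  suffices ∀ k, pathSeq μ k ≤ pathSeq ν k ∧
      pathSeq μ (k + 1) - pathSeq μ k < pathSeq ν (k + 1) - pathSeq ν k from (this k).2
  intro k
  induction k with
  | zero => simp [pathSeq, hμν]
  | succ k ih =>
    have hw : μ * pathSeq μ (k + 1) ≤ ν * pathSeq ν (k + 1) := by
      have := (one_le_pathSeq_and_le_succ_sub hμ (k + 1)).1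
      exact mul_le_mul hμν.le (by linarith [ih.1, ih.2]) (by linarith) (hμ.trans hμν.le)
    constructor <;> linarith [pathSeq_add_two_sub μ k, pathSeq_add_two_sub ν k, ih.1, ih.2]

lemma lapm_pathGraph_mulVec_pathSeq (μ : ℝ) (m : ℕ) :
    (lapm (pathGraph (m + 2)) + μ • 1) *ᵥ (fun i : Fin (m + 2) => pathSeq μ i) =
      Pi.single (Fin.last (m + 1)) (pathSeq μ (m + 2) - pathSeq μ (m + 1)) := by
  ext i
  rw [add_mulVec, smul_mulVec, one_mulVec, Pi.add_apply, lapm_pathGraph_mulVec_apply, Pi.smul_apply, smul_eq_mul, Pi.single_apply]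
  simp only [Fin.ext_iff, Fin.val_last]
  split_ifs with h0 hl hl
  · omega
  · simp [h0, pathSeq]
  · rw [hl, pathSeq]; ring
  · obtain ⟨k, hk⟩ : ∃ k, (i : ℕ) = k + 1 := ⟨i - 1, by omega⟩
    rw [hk, Nat.add_sub_cancel, pathSeq]; ring

lemma lapm_pathGraph_mulVec_pathSeq_rev (μ : ℝ) (m : ℕ) :
    (lapm (pathGraph (m + 2)) + μ • 1) *ᵥ (fun i : Fin (m + 2) => pathSeq μ (m + 1 - i)) =
      Pi.single 0 (pathSeq μ (m + 2) - pathSeq μ (m + 1)) := by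
  ext i
  rw [add_mulVec, smul_mulVec, one_mulVec, Pi.add_apply, lapm_pathGraph_mulVec_apply (g := fun j => pathSeq μ (m + 1 - j)),
    Pi.smul_apply, smul_eq_mul, Pi.single_apply]
  simp only [Fin.ext_iff, Fin.val_zero]
  split_ifs with h0 hl
  · simp only [h0, Nat.sub_zero, Nat.add_sub_cancel, pathSeq]; ring
  · simp [hl, pathSeq]
  · obtain ⟨k, hk⟩ : ∃ k, m + 1 - (i : ℕ) = k + 1 := ⟨m - i, by omega⟩
    rw [show m + 1 - (i - 1 : ℕ) = k + 2 by omega, show m + 1 - (i + 1 : ℕ) = k by omega, hk,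
      pathSeq]
    ring

lemma lapm_pathGraph_mulVec_neg_val (m : ℕ) :
    lapm (pathGraph (m + 2)) *ᵥ (fun i : Fin (m + 2) => -(i : ℝ)) =
      Pi.single 0 1 - Pi.single (Fin.last (m + 1)) 1 := by
  ext i
  rw [lapm_pathGraph_mulVec_apply (g := fun j => -(j : ℝ)), Pi.sub_apply, Pi.single_apply,
    Pi.single_apply]
  simp only [Fin.ext_iff, Fin.val_zero, Fin.val_last]
  split_ifs with h0 hl <;> try omega
  · simp
  · push_cast; ring
  · push_cast [Nat.cast_sub (Nat.one_le_iff_ne_zero.2 h0)]; ring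

section

variable {β : Type*} [Fintype β] [DecidableEq β]

noncomputable def endPot (μ : ℝ) (m : ℕ) (ψ ψ' : β → ℝ) (p : Fin (m + 2) × β) : ℝ :=
  (pathSeq μ (m + 1 - p.1) * ψ p.2 - pathSeq μ p.1 * ψ' p.2) /
    (pathSeq μ (m + 2) - pathSeq μ (m + 1))

lemma lapm_pathGraph_boxProd_mulVec_endPot {H : SimpleGraph β} {μ : ℝ} (hμ : 0 < μ) (m : ℕ)
    {ψ ψ' : β → ℝ} (hψ : lapm H *ᵥ ψ = μ • ψ) (hψ' : lapm H *ᵥ ψ' = μ • ψ') :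
    lapm (pathGraph (m + 2) □ H) *ᵥ endPot μ m ψ ψ' =
      fun p => (Pi.single 0 1 : Fin (m + 2) → ℝ) p.1 * ψ p.2 -
        (Pi.single (Fin.last (m + 1)) 1 : Fin (m + 2) → ℝ) p.1 * ψ' p.2 := by
  set D := pathSeq μ (m + 2) - pathSeq μ (m + 1) with hD_def
  have hD : D ≠ 0 := (pathSeq_succ_sub_pos hμ (m + 1)).ne'
  have heigen : ∀ φ : β → ℝ, lapm H *ᵥ φ = μ • φ →
      lapm H *ᵥ (D⁻¹ • φ) = μ • D⁻¹ • φ := by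
    intro φ hφ
    rw [mulVec_smul, hφ, smul_comm]
  have hsplit : endPot μ m ψ ψ' =
      (fun p => pathSeq μ (m + 1 - p.1) * (D⁻¹ • ψ) p.2) -
        fun p => pathSeq μ p.1 * (D⁻¹ • ψ') p.2 := by
    ext p
    simp only [endPot, Pi.sub_apply, Pi.smul_apply, smul_eq_mul]
    ring
  rw [hsplit, mulVec_sub,
    lapm_boxProd_mulVec_mul _ (fun i : Fin (m + 2) => pathSeq μ (m + 1 - i)) (heigen ψ hψ),
    lapm_boxProd_mulVec_mul _ (fun i : Fin (m + 2) => pathSeq μ i) (heigen ψ' hψ'),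
    lapm_pathGraph_mulVec_pathSeq_rev, lapm_pathGraph_mulVec_pathSeq, ← hD_def]
  ext p
  simp only [Pi.sub_apply, Pi.smul_apply, smul_eq_mul, Pi.single_apply]
  split_ifs <;> field_simp <;> ring

end

/-- `cos (π x / 2)` on `ℤ/4`. -/
noncomputable def cosC4 : Fin 4 → ℝ := ![1, 0, -1, 0]

/-- `(-1) ^ x` on `ℤ/4`. -/
noncomputable def signC4 : Fin 4 → ℝ := ![1, -1, 1, -1]

lemma cosC4_neg (c : Fin 4) : cosC4 (-c) = cosC4 c := by
  revert c; simp [Fin.forall_fin_succ, cosC4]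

lemma signC4_neg (c : Fin 4) : signC4 (-c) = signC4 c := by
  revert c; simp [Fin.forall_fin_succ, signC4]

lemma lapm_cycleGraph_mulVec_cosC4 (c : Fin 4) :
    lapm (cycleGraph 4) *ᵥ (fun b => cosC4 (b - c)) = (2 : ℝ) • fun b => cosC4 (b - c) := by
  have key : ∀ x : Fin 4, 2 * cosC4 x - cosC4 (x - 1) - cosC4 (x + 1) = 2 * cosC4 x := by
    simp [Fin.forall_fin_succ, cosC4]
  ext b
  rw [lapm_cycleGraph_mulVec_apply 1, Pi.smul_apply, smul_eq_mul,
    show b - 1 - c = b - c - 1 by abel, show b + 1 - c = b - c + 1 by abel]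
  exact key (b - c)

lemma lapm_cycleGraph_mulVec_signC4 (c : Fin 4) :
    lapm (cycleGraph 4) *ᵥ (fun b => signC4 (b - c)) = (4 : ℝ) • fun b => signC4 (b - c) := by
  have key : ∀ x : Fin 4, 2 * signC4 x - signC4 (x - 1) - signC4 (x + 1) = 4 * signC4 x := by
    simp [Fin.forall_fin_succ, signC4]
    norm_num
  ext b
  rw [lapm_cycleGraph_mulVec_apply 1, Pi.smul_apply, smul_eq_mul,
    show b - 1 - c = b - c - 1 by abel, show b + 1 - c = b - c + 1 by abel]
  exact key (b - c)

lemma single_zero_eq_fourier_c4 (x : Fin 4) :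
    (Pi.single 0 1 : Fin 4 → ℝ) x = 1 / 4 + cosC4 x / 2 + signC4 x / 4 := by
  revert x
  norm_num [Fin.forall_fin_succ, cosC4, signC4, Pi.single_apply]

noncomputable def towerPot (m : ℕ) (c : Fin 4) : Fin (m + 2) × Fin 4 → ℝ :=
  (fun p => -(p.1 : ℝ) * (1 / 4)) + (1 / 2 : ℝ) • endPot 2 m cosC4 (fun b => cosC4 (b - c)) +
    (1 / 4 : ℝ) • endPot 4 m signC4 (fun b => signC4 (b - c))

lemma lapm_mulVec_towerPot (m : ℕ) (c : Fin 4) :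
    lapm (pathGraph (m + 2) □ cycleGraph 4) *ᵥ towerPot m c =
      Pi.single (0, 0) 1 - Pi.single (Fin.last (m + 1), c) 1 := by
  have hconst : lapm (cycleGraph 4) *ᵥ (fun _ => (1 / 4 : ℝ)) = (0 : ℝ) • fun _ => 1 / 4 := by
    rw [lapm_mulVec_const, zero_smul]
  have hcos : lapm (cycleGraph 4) *ᵥ cosC4 = (2 : ℝ) • cosC4 := by
    simpa using lapm_cycleGraph_mulVec_cosC4 0
  have hsign : lapm (cycleGraph 4) *ᵥ signC4 = (4 : ℝ) • signC4 := by
    simpa using lapm_cycleGraph_mulVec_signC4 0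
  rw [towerPot, mulVec_add, mulVec_add, mulVec_smul, mulVec_smul,
    lapm_boxProd_mulVec_mul _ (fun i : Fin (m + 2) => -(i : ℝ)) hconst, zero_smul, add_zero,
    lapm_pathGraph_mulVec_neg_val,
    lapm_pathGraph_boxProd_mulVec_endPot two_pos m hcos (lapm_cycleGraph_mulVec_cosC4 c),
    lapm_pathGraph_boxProd_mulVec_endPot four_pos m hsign (lapm_cycleGraph_mulVec_signC4 c)]
  ext ⟨i, b⟩
  have h₀ := single_zero_eq_fourier_c4 b
  have h₁ := single_zero_eq_fourier_c4 (b - c)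
  simp only [Pi.single_apply, sub_eq_zero] at h₀ h₁
  simp only [Pi.add_apply, Pi.sub_apply, Pi.smul_apply, smul_eq_mul, Pi.single_apply,
    Prod.mk.injEq, ite_and, h₀, h₁]
  split_ifs <;> ring

lemma resDist_pathGraph_boxProd_cycleGraph_four (m : ℕ) (c : Fin 4) :
    resDist (pathGraph (m + 2) □ cycleGraph 4) (0, 0) (Fin.last (m + 1), c) =
      (m + 1) / 4 + (pathSeq 2 (m + 1) - cosC4 c) / (pathSeq 2 (m + 2) - pathSeq 2 (m + 1)) +
        (pathSeq 4 (m + 1) - signC4 c) / (2 * (pathSeq 4 (m + 2) - pathSeq 4 (m + 1))) := by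
  rw [resDist_eq_of_lapm_mulVec_eq (lapm_mulVec_towerPot m c)]
  simp only [towerPot, endPot, Pi.add_apply, Pi.smul_apply, smul_eq_mul, zero_sub, sub_self,
    cosC4_neg, signC4_neg, Fin.val_zero, Fin.val_last, Nat.sub_zero, Nat.sub_self]
  have := (pathSeq_succ_sub_pos two_pos (m + 1)).ne'
  have := (pathSeq_succ_sub_pos four_pos (m + 1)).ne'
  field_simp
  simp [pathSeq, cosC4, signC4]
  ring

/-- In `G_n = P_n □ C_4`, `R[(a₁,b₁),(aₙ,b₂)] < R[(a₁,b₁),(aₙ,b₃)]`. -/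
theorem resDist_blockTower_adjacent_lt_diag (n : ℕ) (hn : 2 ≤ n) :
    resDist ((SimpleGraph.pathGraph n).boxProd (SimpleGraph.cycleGraph 4))
        (⟨0, by omega⟩, 0) (⟨n - 1, by omega⟩, 1)
      < resDist ((SimpleGraph.pathGraph n).boxProd (SimpleGraph.cycleGraph 4))
          (⟨0, by omega⟩, 0) (⟨n - 1, by omega⟩, 2) := by
  obtain ⟨m, rfl⟩ : ∃ m, n = m + 2 := ⟨n - 2, by omega⟩
  change resDist _ (0, 0) (Fin.last (m + 1), 1) < resDist _ (0, 0) (Fin.last (m + 1), 2)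
  have hcos : cosC4 1 = 0 ∧ cosC4 2 = -1 := by simp [cosC4, Matrix.cons_val_two]
  have hsign : signC4 1 = -1 ∧ signC4 2 = 1 := by simp [signC4, Matrix.cons_val_two]
  rw [resDist_pathGraph_boxProd_cycleGraph_four, resDist_pathGraph_boxProd_cycleGraph_four,
    hcos.1, hcos.2, hsign.1, hsign.2]
  set D₂ := pathSeq 2 (m + 2) - pathSeq 2 (m + 1)
  set D₄ := pathSeq 4 (m + 2) - pathSeq 4 (m + 1)
  have hD₂ : 0 < D₂ := pathSeq_succ_sub_pos two_pos (m + 1)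
  have hD₄ : D₂ < D₄ := pathSeq_succ_sub_lt zero_le_two (by norm_num) (m + 1)
  rw [← sub_pos]
  calc 0 < 1 / D₂ - 1 / D₄ := sub_pos.2 (one_div_lt_one_div_of_lt hD₂ hD₄)
    _ = _ := by field_simp; ring
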